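/- In any window of 3f+1 consecutive rounds with round-robin leader assignment (leader of round r is r mod n, n = 3f+1, at most f Byzantine parties), there are at least f rounds r in the window such that both r-1 and r have honest leaders. -/

import Mathlib

open Fin.NatCast

/-!
A round is bad if the leader of round `r - 1` or of round `r` is Byzantine. The window has `3f`
rounds, fewer than `n` of them, so `r ↦ r mod n` and `r ↦ (r - 1) mod n` are injective on it:
each Byzantine party leads at most one round `r` and at most one round `r - 1` of the window.
Hence there are at most `2f` bad rounds, and at least `3f - 2f = f` good ones.
-/

open Finset

lemma Fin.natCast_injOn_Ico (n a : ℕ) [NeZero n] :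
    Set.InjOn (fun r : ℕ => (r : Fin n)) (Ico a (a + n)) := fun _ hx _ hy h =>
  Nat.mod_injOn_Ico a n hx hy (by simpa only [Fin.ext_iff, Fin.val_natCast] using h)

lemma Finset.card_filter_apply_mem_le {α β : Type*} [DecidableEq β]
    {s : Finset α} {B : Finset β} {φ : α → β} (hφ : Set.InjOn φ s) :
    #(s.filter (φ · ∈ B)) ≤ #B :=
  card_le_card_of_injOn φ (fun _ hr => (mem_filter.mp hr).2)
    (hφ.mono (coe_subset.mpr (filter_subset _ s)))

lemma Finset.card_sub_two_mul_card_le_card_filter_notMem {α β : Type*}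
    [DecidableEq α] [DecidableEq β] {s : Finset α} {B : Finset β} {φ ψ : α → β}
    (hφ : Set.InjOn φ s) (hψ : Set.InjOn ψ s) :
    #s - 2 * #B ≤ #(s.filter (fun r => φ r ∉ B ∧ ψ r ∉ B)) := by
  have hbad : s.filter (fun r => ¬(φ r ∉ B ∧ ψ r ∉ B)) ⊆
      s.filter (φ · ∈ B) ∪ s.filter (ψ · ∈ B) := by
    intro r
    simp only [mem_filter, mem_union]
    tauto
  have hsplit := card_filter_add_card_filter_not (s := s) (fun r => φ r ∉ B ∧ ψ r ∉ B)
  have hunion := (card_le_card hbad).trans (card_union_le _ _)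
  have hφB := card_filter_apply_mem_le (B := B) hφ
  have hψB := card_filter_apply_mem_le (B := B) hψ
  omega

theorem stmt2_general (f : ℕ) (B : Finset (Fin (3*f+1)))
    (hB : B.card ≤ f) (R : ℕ) :
    f ≤ ((Finset.Icc (R+1) (R+3*f)).filter
      (fun (r : ℕ) => (↑(r-1) : Fin (3*f+1)) ∉ B ∧ (↑r : Fin (3*f+1)) ∉ B)).card := by
  have hleader : Set.InjOn (fun r : ℕ => (r : Fin (3*f+1))) (Icc (R+1) (R+3*f)) := by
    refine (Fin.natCast_injOn_Ico _ (R+1)).mono fun r hr => ?_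
    simp only [coe_Icc, coe_Ico, Set.mem_Icc, Set.mem_Ico] at hr ⊢
    omega
  have hprev : Set.InjOn (fun r : ℕ => ((r - 1 : ℕ) : Fin (3*f+1))) (Icc (R+1) (R+3*f)) := by
    refine (Fin.natCast_injOn_Ico _ R).comp (f := (· - 1)) ?_ ?_
    · intro a ha b hb (hab : a - 1 = b - 1)
      simp only [coe_Icc, Set.mem_Icc] at ha hb
      omega
    · intro r hr
      simp only [coe_Icc, coe_Ico, Set.mem_Icc, Set.mem_Ico] at hr ⊢
      omega
  have hgood := card_sub_two_mul_card_le_card_filter_notMem (B := B) hprev hleader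
  rw [Nat.card_Icc] at hgood
  omega

/-- In the window [R+1, R+3f] of 3f consecutive rounds with round-robin
leaders (leader of round r is r mod n, n = 3f+1, at most f Byzantine),
at least f rounds r have both r-1 and r with honest leaders. -/
theorem stmt2 (f : ℕ) (hf : 1 ≤ f) (B : Finset (Fin (3*f+1)))
    (hB : B.card ≤ f) (R : ℕ) :
    f ≤ ((Finset.Icc (R+1) (R+3*f)).filter
      (fun (r : ℕ) => (↑(r-1) : Fin (3*f+1)) ∉ B ∧ (↑r : Fin (3*f+1)) ∉ B)).card :=
  stmt2_general f B hB R
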